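/- Let $\mathbf{y}$ be a weakly stationary sequence with bounded spectral density and Wold decomposition $\mathbf{y} = \hat{\mathbf{y}} + \check{\mathbf{y}}$ into purely deterministic and purely nondeterministic parts. Then the aggregation subspace satisfies $\mathcal{G}(\mathbf{y}) \subseteq H_\infty(\mathbf{y})$, the remote future subspace. -/

import Mathlib

open Filter MeasureTheory Metric Finset
open scoped RealInnerProductSpace Topology

/-!
Fix `m` and let `S` be the closed span of `{y s : s ≥ m}`; it contains every `ŷ k`. The
averaged sum `∑ₖ aₙₖ • y k` differs from the element `∑ₖ aₙₖ • ŷ k` of `S` by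
`∑ₖ aₙₖ • y̌ k`, whose squared norm is at most `M ∑ₖ aₙₖ²` by the bounded spectral density of
`y̌`. Hence the distance from `sₙ` to `S` is at most `√(M ∑ₖ aₙₖ²) → 0`, and the limit `z`
lies in the closed set `S`.
-/

theorem IsClosed.mem_of_tendsto_of_infDist_le {X : Type*} [PseudoMetricSpace X] {S : Set X}
    (hS : IsClosed S) (hne : S.Nonempty) {u : ℕ → X} {x : X} {b : ℕ → ℝ}
    (hu : Tendsto u atTop (𝓝 x)) (hdist : ∀ n, infDist (u n) S ≤ b n)
    (hb : Tendsto b atTop (𝓝 0)) : x ∈ S := by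
  have hdist_lim : Tendsto (fun n => infDist (u n) S) atTop (𝓝 0) :=
    squeeze_zero (fun _ => infDist_nonneg) hdist hb
  have hx : infDist x S = 0 :=
    tendsto_nhds_unique (((continuous_infDist_pt S).tendsto x).comp hu) hdist_lim
  exact (hS.mem_iff_infDist_zero hne).mpr hx

theorem Memℓp.summable_sq {α : Type*} {c : α → ℝ} (hc : Memℓp c 2) : Summable fun k => c k ^ 2 := by
  simpa using hc.summable (by norm_num)

section

variable {E : Type*} [NormedAddCommGroup E] [NormedSpace ℝ E]

theorem infDist_sum_smul_le_norm_sum_smul {ι : Type*} {S : Submodule ℝ E}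
    {y yhat ycheck : ι → E} (hwold : ∀ k, y k = yhat k + ycheck k) (hhat : ∀ k, yhat k ∈ S)
    (t : Finset ι) (c : ι → ℝ) :
    infDist (∑ k ∈ t, c k • y k) (S : Set E) ≤ ‖∑ k ∈ t, c k • ycheck k‖ := by
  have hmem : ∑ k ∈ t, c k • yhat k ∈ S := S.sum_mem fun k _ => S.smul_mem _ (hhat k)
  have hdiff : ∑ k ∈ t, c k • y k - ∑ k ∈ t, c k • yhat k = ∑ k ∈ t, c k • ycheck k := by
    simp only [hwold, smul_add, sum_add_distrib, add_sub_cancel_left]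
  simpa only [dist_eq_norm, hdiff] using infDist_le_dist_of_mem (x := ∑ k ∈ t, c k • y k) hmem

theorem norm_sum_range_smul_le_sqrt_tsum {v : ℕ → E} {M : ℝ}
    (hM : ∀ (n : ℕ) (x : ℕ → ℝ), ‖∑ k ∈ range n, x k • v k‖ ^ 2 ≤ M * ∑ k ∈ range n, x k ^ 2)
    {c : ℕ → ℝ} (hc : Summable fun k => c k ^ 2) (N : ℕ) :
    ‖∑ k ∈ range N, c k • v k‖ ≤ √(M * ∑' k, c k ^ 2) := by
  have hM_nonneg : 0 ≤ M := by simpa using (sq_nonneg _).trans (hM 1 fun _ => 1)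
  refine Real.le_sqrt_of_sq_le ((hM N c).trans ?_)
  exact mul_le_mul_of_nonneg_left (hc.sum_le_tsum _ fun k _ => sq_nonneg _) hM_nonneg

end

theorem aggregation_subspace_subset_remote_future_general
    {Ω : Type*} [MeasurableSpace Ω] (μ : Measure Ω)
    (y yhat ycheck : ℕ → Lp ℝ 2 μ)
    (hwold : ∀ k, y k = yhat k + ycheck k)
    (hhatmem : ∀ k, yhat k ∈
      ⨅ m : ℕ, (Submodule.span ℝ {v : Lp ℝ 2 μ | ∃ s, m ≤ s ∧ v = y s}).topologicalClosure)
    (hcheckbdd : ∃ M : ℝ, ∀ (n : ℕ) (x : ℕ → ℝ),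
      ‖∑ k ∈ Finset.range n, x k • ycheck k‖ ^ 2 ≤ M * ∑ k ∈ Finset.range n, x k ^ 2)
    (a : ℕ → ℕ → ℝ) (s : ℕ → Lp ℝ 2 μ) (z : Lp ℝ 2 μ)
    (ha2 : ∀ n, Memℓp (a n) 2)
    (hAS : Tendsto (fun n => ∑' k, (a n k) ^ 2) atTop (nhds 0))
    (hs : ∀ n, Tendsto (fun N => ∑ k ∈ Finset.range N, a n k • y k) atTop (nhds (s n)))
    (hz : Tendsto s atTop (nhds z)) :
    z ∈ ⨅ m : ℕ,
      (Submodule.span ℝ {v : Lp ℝ 2 μ | ∃ s', m ≤ s' ∧ v = y s'}).topologicalClosure := by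
  obtain ⟨M, hM⟩ := hcheckbdd
  refine Submodule.mem_iInf _ |>.mpr fun m => ?_
  set S := (Submodule.span ℝ {v : Lp ℝ 2 μ | ∃ s', m ≤ s' ∧ v = y s'}).topologicalClosure
  have hhat : ∀ k, yhat k ∈ S := fun k => (Submodule.mem_iInf _).mp (hhatmem k) m
  have hdist : ∀ n, infDist (s n) (S : Set (Lp ℝ 2 μ)) ≤ √(M * ∑' k, a n k ^ 2) := fun n =>
    le_of_tendsto (((continuous_infDist_pt _).tendsto _).comp (hs n)) <| .of_forall fun N =>
      (infDist_sum_smul_le_norm_sum_smul hwold hhat _ _).trans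
        (norm_sum_range_smul_le_sqrt_tsum hM (ha2 n).summable_sq N)
  have hbound : Tendsto (fun n => √(M * ∑' k, a n k ^ 2)) atTop (𝓝 0) := by
    simpa using (hAS.const_mul M).sqrt
  exact (Submodule.isClosed_topologicalClosure _).mem_of_tendsto_of_infDist_le ⟨0, S.zero_mem⟩
    hz hdist hbound

/-- let `y` be weakly stationary with Wold decomposition
`y = ŷ + y̌` into a purely deterministic part `ŷ` (lying in the remote future
subspace `H_∞(y) = ⋂ₖ span{y(s) : s ≥ k}`) and a purely nondeterministic part `y̌`
with bounded spectral density (expressed via the boundedness of its covariance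
operator, by Szegő's theorem). Then the aggregation subspace satisfies
`𝒢(y) ⊆ H_∞(y)`: every `L²`-limit `z` along an averaging sequence lies in `H_∞(y)`. -/
theorem aggregation_subspace_subset_remote_future
    {Ω : Type*} [MeasurableSpace Ω] (μ : Measure Ω) [IsProbabilityMeasure μ]
    (y yhat ycheck : ℕ → Lp ℝ 2 μ)
    (hmean : ∀ k, ∫ ω, (y k : Ω → ℝ) ω ∂μ = 0)
    (hstat : ∀ k j m : ℕ, ⟪y (k + m), y (j + m)⟫ = ⟪y k, y j⟫)
    (hwold : ∀ k, y k = yhat k + ycheck k)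
    (hhatmem : ∀ k, yhat k ∈
      ⨅ m : ℕ, (Submodule.span ℝ {v : Lp ℝ 2 μ | ∃ s, m ≤ s ∧ v = y s}).topologicalClosure)
    (horth : ∀ k j, ⟪yhat k, ycheck j⟫ = 0)
    (hcheckbdd : ∃ M : ℝ, ∀ (n : ℕ) (x : ℕ → ℝ),
      ‖∑ k ∈ Finset.range n, x k • ycheck k‖ ^ 2 ≤ M * ∑ k ∈ Finset.range n, x k ^ 2)
    (a : ℕ → ℕ → ℝ) (s : ℕ → Lp ℝ 2 μ) (z : Lp ℝ 2 μ)
    (ha2 : ∀ n, Memℓp (a n) 2)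
    (hAS : Tendsto (fun n => ∑' k, (a n k) ^ 2) atTop (nhds 0))
    (hs : ∀ n, Tendsto (fun N => ∑ k ∈ Finset.range N, a n k • y k) atTop (nhds (s n)))
    (hz : Tendsto s atTop (nhds z)) :
    z ∈ ⨅ m : ℕ,
      (Submodule.span ℝ {v : Lp ℝ 2 μ | ∃ s', m ≤ s' ∧ v = y s'}).topologicalClosure :=
  aggregation_subspace_subset_remote_future_general μ y yhat ycheck hwold hhatmem hcheckbdd a s z
    ha2 hAS hs hz
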